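/- Let Σ be a finite alphabet of size q ≥ 2, n ≥ 1, and let (K, Enc, Dec) be a finitary messageless secret-key code over Σ with codeword length n. Suppose the code has soundness error ε_s (for every fixed γ̂ ∈ Σ^n, P_sk[Dec(sk, γ̂) ≠ invalid] ≤ ε_s). Let U be uniformly distributed on Σ^n, independent of sk, and suppose the tamper-detection failure against the uniform tamperer is at most ε_t, i.e. P[Dec(sk, U) ≠ tampered ∧ U ≠ Enc(sk)] ≤ ε_t. Then ε_s + ε_t ≥ 1 − q^{−n}. -/

import Mathlib

open Finset Classical

/-- Decoding outcomes of a messageless secret-key code. -/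
inductive DecOut where
  | valid
  | invalid
  | tampered
deriving DecidableEq

/-!
The uniformly random string `U` falls into one of three events: `U = Enc sk`, which has
probability `q^(-n)`; `U ≠ Enc sk` and the decoder does not report tampering, which is bounded
by `εt`; or `U ≠ Enc sk` and the decoder reports tampering. In the last event `Dec sk U` is not
`invalid`, so for each fixed value of `U` its probability over `sk` is at most `εs`, and averaging
over `U` keeps the bound `εs`.
-/

section JointProb

variable {K Γ : Type} [Fintype K] [Fintype Γ]

def jointProb (w : K → ℝ) (v : Γ → ℝ) (E : K → Γ → Prop) [∀ k u, Decidable (E k u)] : ℝ :=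
  ∑ k, ∑ u, if E k u then w k * v u else 0

variable {w : K → ℝ} {v : Γ → ℝ}

theorem jointProb_true (hw1 : ∑ k, w k = 1) (hv1 : ∑ u, v u = 1) :
    jointProb w v (fun _ _ => True) = 1 := by
  simp [jointProb, ← mul_sum, hv1, hw1]

theorem jointProb_snd_eq_apply (Enc : K → Γ) [DecidableEq Γ] :
    jointProb w v (fun k u => u = Enc k) = ∑ k, w k * v (Enc k) := by
  simp [jointProb]

theorem jointProb_le_add (hw0 : ∀ k, 0 ≤ w k) (hv0 : ∀ u, 0 ≤ v u)
    {E F G : K → Γ → Prop} [∀ k u, Decidable (E k u)] [∀ k u, Decidable (F k u)]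
    [∀ k u, Decidable (G k u)] (hEFG : ∀ k u, E k u → F k u ∨ G k u) :
    jointProb w v E ≤ jointProb w v F + jointProb w v G := by
  simp only [jointProb, ← sum_add_distrib]
  gcongr with k _ u _
  have := mul_nonneg (hw0 k) (hv0 u)
  have := hEFG k u
  split_ifs <;> simp_all

theorem jointProb_le_of_forall_le (hv0 : ∀ u, 0 ≤ v u) (hv1 : ∑ u, v u = 1)
    {E : K → Γ → Prop} [∀ k u, Decidable (E k u)] {ε : ℝ}
    (hE : ∀ u, (∑ k, if E k u then w k else 0) ≤ ε) :
    jointProb w v E ≤ ε :=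
  calc jointProb w v E = ∑ u, (∑ k, if E k u then w k else 0) * v u := by
        rw [jointProb, sum_comm]
        simp only [sum_mul, ite_mul, zero_mul]
    _ ≤ ∑ u, ε * v u := by gcongr with u; exacts [hv0 u, hE u]
    _ = ε := by rw [← mul_sum, hv1, mul_one]

end JointProb

theorem sum_ite_le_sum_ite_of_imp {K : Type} [Fintype K] {w : K → ℝ} (hw0 : ∀ k, 0 ≤ w k)
    {P Q : K → Prop} [DecidablePred P] [DecidablePred Q] (hPQ : ∀ k, P k → Q k) :
    (∑ k, if P k then w k else 0) ≤ ∑ k, if Q k then w k else 0 := by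
  gcongr with k
  have := hw0 k
  have := hPQ k
  split_ifs <;> simp_all

theorem stmt_0_general
    {S K : Type} [Fintype S] [DecidableEq S] [Fintype K]
    {n : ℕ} (hq : 2 ≤ Fintype.card S)
    (w : K → ℝ) (hw0 : ∀ k, 0 ≤ w k) (hw1 : ∑ k, w k = 1)
    (Enc : K → Fin n → S) (Dec : K → (Fin n → S) → DecOut)
    (εs εt : ℝ)
    (hsound : ∀ γ : Fin n → S,
      (∑ k, if Dec k γ ≠ DecOut.invalid then w k else 0) ≤ εs)
    (htamper :
      (∑ k, ∑ u : Fin n → S,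
        if Dec k u ≠ DecOut.tampered ∧ u ≠ Enc k
        then w k * ((Fintype.card S : ℝ) ^ n)⁻¹ else 0) ≤ εt) :
    1 - ((Fintype.card S : ℝ) ^ n)⁻¹ ≤ εs + εt := by
  set p : ℝ := ((Fintype.card S : ℝ) ^ n)⁻¹
  set v : (Fin n → S) → ℝ := fun _ => p
  have hv0 : ∀ u, 0 ≤ v u := fun _ => by positivity
  have hv1 : ∑ u, v u = 1 := by
    have : (Fintype.card S : ℝ) ≠ 0 := by norm_cast; omega
    simp [v, p, pow_ne_zero n this]
  have hcover := jointProb_le_add (E := fun _ _ => True) (F := fun k u => u = Enc k)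
    (G := fun k u => u ≠ Enc k) hw0 hv0 (fun k u _ => Classical.em (u = Enc k))
  have hmiss := jointProb_le_add (E := fun k u => u ≠ Enc k)
    (F := fun k u => Dec k u ≠ DecOut.tampered ∧ u ≠ Enc k)
    (G := fun k u => Dec k u = DecOut.tampered ∧ u ≠ Enc k) hw0 hv0
    (fun k u h => (Classical.em _).imp (⟨·, h⟩) (⟨not_not.mp ·, h⟩))
  have hdetect : jointProb w v (fun k u => Dec k u = DecOut.tampered ∧ u ≠ Enc k) ≤ εs :=
    jointProb_le_of_forall_le hv0 hv1 fun u =>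
      (sum_ite_le_sum_ite_of_imp hw0 fun k h => by simp [h.1]).trans (hsound u)
  rw [jointProb_true hw1 hv1, jointProb_snd_eq_apply, ← sum_mul, hw1, one_mul] at hcover
  have hundetected :
      jointProb w v (fun k u => Dec k u ≠ DecOut.tampered ∧ u ≠ Enc k) ≤ εt := htamper
  linarith

/-- For any finitary messageless secret-key code over an alphabet of size
`q ≥ 2` with codeword length `n ≥ 1`, soundness error `εs`, and tamper-detection failure
at most `εt` against the uniform tamperer (an independent uniform `U` on `Σ^n`),
we have `εs + εt ≥ 1 - q^(-n)`. -/
theorem stmt_0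
    {S K : Type} [Fintype S] [DecidableEq S] [Fintype K] [Nonempty K]
    {n : ℕ} (hn : 1 ≤ n) (hq : 2 ≤ Fintype.card S)
    (w : K → ℝ) (hw0 : ∀ k, 0 ≤ w k) (hw1 : ∑ k, w k = 1)
    (Enc : K → Fin n → S) (Dec : K → (Fin n → S) → DecOut)
    (εs εt : ℝ)
    (hsound : ∀ γ : Fin n → S,
      (∑ k, if Dec k γ ≠ DecOut.invalid then w k else 0) ≤ εs)
    (htamper :
      (∑ k, ∑ u : Fin n → S,
        if Dec k u ≠ DecOut.tampered ∧ u ≠ Enc k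
        then w k * ((Fintype.card S : ℝ) ^ n)⁻¹ else 0) ≤ εt) :
    1 - ((Fintype.card S : ℝ) ^ n)⁻¹ ≤ εs + εt :=
  stmt_0_general hq w hw0 hw1 Enc Dec εs εt hsound htamper
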